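/- arXiv:2307.01974 — 2 statements merged into one kernel-verified Lean document; each statement's English description precedes it below -/
import Mathlib

section
/- Let ρ ∈ (−1,1) and u ∈ ℝ. Then ∫_u^∞ ∫_{−∞}^0 w · P_ρ(z,w) dw dz = −(1/√(2π)) · [ Ψ(u/√(1−ρ²)) − √(2π) · ρ · φ(u) · Φ(−ρu/√(1−ρ²)) ], where the inner integral is over w ∈ (−∞,0) and the outer over z ∈ (u,∞). -/
open MeasureTheory Real

/-- The standard normal pdf. -/
noncomputable def stdPdf (x : ℝ) : ℝ := (Real.sqrt (2 * Real.pi))⁻¹ * Real.exp (-x ^ 2 / 2)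

/-- The standard normal cdf. -/
noncomputable def stdCdf (x : ℝ) : ℝ := ∫ s in Set.Iio x, stdPdf s

/-- The standard normal tail probability. -/
noncomputable def stdTail (x : ℝ) : ℝ := 1 - stdCdf x

/-- The joint density of a standard bivariate normal vector with correlation ρ. -/
noncomputable def binormPdf (ρ x y : ℝ) : ℝ :=
  (2 * Real.pi * Real.sqrt (1 - ρ ^ 2))⁻¹ *
    Real.exp (-(x ^ 2 - 2 * ρ * x * y + y ^ 2) / (2 * (1 - ρ ^ 2)))

/-!
Given Z = z, the second coordinate is normal with mean ρz and variance σ² = 1 - ρ², i.e.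
P_ρ(z, w) = φ(z) φ((w - ρz)/σ)/σ. The inner integral is therefore a partial first moment of
a normal law, φ(z) (ρz Φ(-ρz/σ) - σ φ(ρz/σ)), read off from the antiderivative
m Φ((w - m)/σ) - σ φ((w - m)/σ) of w φ((w - m)/σ)/σ. Because φ(z) φ(ρz/σ) = φ(z/σ)/√(2π),
this is in turn the derivative of -Φ(z/σ)/√(2π) - ρ φ(z) Φ(-ρz/σ), which tends to -1/√(2π)
at +∞.
-/

open Filter Set ProbabilityTheory Topology

lemma stdPdf_eq_gaussianPDFReal : stdPdf = gaussianPDFReal 0 1 := by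
  ext x
  simp [stdPdf, gaussianPDFReal]

lemma continuous_stdPdf : Continuous stdPdf := by
  unfold stdPdf
  fun_prop

lemma integrable_stdPdf : Integrable stdPdf :=
  stdPdf_eq_gaussianPDFReal ▸ integrable_gaussianPDFReal 0 1

lemma integrable_mul_stdPdf : Integrable fun x => x * stdPdf x := by
  refine ((integrable_mul_exp_neg_mul_sq (b := 1 / 2) (by norm_num)).const_mul
    (√(2 * π))⁻¹).congr (.of_forall fun x => ?_)
  simp only [stdPdf]
  ring_nf

lemma hasDerivAt_stdPdf (x : ℝ) : HasDerivAt stdPdf (-x * stdPdf x) x := by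
  have h : HasDerivAt (fun y : ℝ => -y ^ 2 / 2) (-x) x :=
    ((hasDerivAt_pow 2 x).neg.div_const 2).congr_deriv (by push_cast; ring)
  rw [show -x * stdPdf x = (√(2 * π))⁻¹ * (exp (-x ^ 2 / 2) * -x) by unfold stdPdf; ring]
  exact h.exp.const_mul _

lemma tendsto_stdPdf_atTop : Tendsto stdPdf atTop (𝓝 0) :=
  tendsto_zero_of_hasDerivAt_of_integrableOn_Ioi (a := 0) (fun x _ => hasDerivAt_stdPdf x)
    (by simpa using integrable_mul_stdPdf.neg.integrableOn) integrable_stdPdf.integrableOn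

lemma tendsto_stdPdf_atBot : Tendsto stdPdf atBot (𝓝 0) :=
  tendsto_zero_of_hasDerivAt_of_integrableOn_Iic (a := 0) (fun x _ => hasDerivAt_stdPdf x)
    (by simpa using integrable_mul_stdPdf.neg.integrableOn) integrable_stdPdf.integrableOn

lemma stdPdf_mul_stdPdf {x y c : ℝ} (h : x ^ 2 + y ^ 2 = c ^ 2) :
    stdPdf x * stdPdf y = (√(2 * π))⁻¹ * stdPdf c := by
  simp only [stdPdf]
  rw [mul_mul_mul_comm, ← exp_add, ← h]
  ring_nf

lemma stdCdf_eq_cdf_gaussianReal : stdCdf = cdf (gaussianReal 0 1) := by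
  ext x
  rw [cdf_eq_real, measureReal_def, gaussianReal_apply_eq_integral _ one_ne_zero,
    ENNReal.toReal_ofReal (setIntegral_nonneg measurableSet_Iic
      fun _ _ => gaussianPDFReal_nonneg _ _ _),
    ← stdPdf_eq_gaussianPDFReal, integral_Iic_eq_integral_Iio, stdCdf]

lemma tendsto_stdCdf_atTop : Tendsto stdCdf atTop (𝓝 1) :=
  stdCdf_eq_cdf_gaussianReal ▸ tendsto_cdf_atTop _

lemma tendsto_stdCdf_atBot : Tendsto stdCdf atBot (𝓝 0) :=
  stdCdf_eq_cdf_gaussianReal ▸ tendsto_cdf_atBot _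

lemma abs_stdCdf_le_one (x : ℝ) : |stdCdf x| ≤ 1 := by
  rw [stdCdf_eq_cdf_gaussianReal, abs_of_nonneg (cdf_nonneg _ _)]
  exact cdf_le_one _ _

lemma hasDerivAt_stdCdf (x : ℝ) : HasDerivAt stdCdf (stdPdf x) x := by
  have h : ∀ y, stdCdf y = stdCdf 0 + ∫ t in (0 : ℝ)..y, stdPdf t := fun y => by
    rw [← intervalIntegral.integral_Iic_sub_Iic integrable_stdPdf.integrableOn
      integrable_stdPdf.integrableOn, stdCdf, stdCdf, ← integral_Iic_eq_integral_Iio,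
      ← integral_Iic_eq_integral_Iio]
    ring
  rw [funext h]
  exact (intervalIntegral.integral_hasDerivAt_right (continuous_stdPdf.intervalIntegrable _ _)
    (continuous_stdPdf.stronglyMeasurableAtFilter _ _) continuous_stdPdf.continuousAt).const_add _

lemma continuous_stdCdf : Continuous stdCdf :=
  continuous_iff_continuousAt.2 fun x => (hasDerivAt_stdCdf x).continuousAt

lemma integrable_mul_stdPdf_div {σ : ℝ} (hσ : σ ≠ 0) (m : ℝ) :
    Integrable fun w => w * (stdPdf ((w - m) / σ) / σ) := by
  have h : Integrable fun t => (σ * (t * stdPdf t) + m * stdPdf t) / σ :=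
    ((integrable_mul_stdPdf.const_mul σ).add (integrable_stdPdf.const_mul m)).div_const σ
  refine ((h.comp_div hσ).comp_sub_right m).congr (.of_forall fun w => ?_)
  field_simp
  ring

lemma integral_Iio_mul_stdPdf_div {σ : ℝ} (hσ : 0 < σ) (m a : ℝ) :
    ∫ w in Iio a, w * (stdPdf ((w - m) / σ) / σ) =
      m * stdCdf ((a - m) / σ) - σ * stdPdf ((a - m) / σ) := by
  have hderiv (w : ℝ) : HasDerivAt (fun w => m * stdCdf ((w - m) / σ) - σ * stdPdf ((w - m) / σ))
      (w * (stdPdf ((w - m) / σ) / σ)) w := by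
    have ht : HasDerivAt (fun w => (w - m) / σ) (1 / σ) w :=
      ((hasDerivAt_id w).sub_const m).div_const σ
    refine ((((hasDerivAt_stdCdf _).comp w ht).const_mul m).sub
      (((hasDerivAt_stdPdf _).comp w ht).const_mul σ)).congr_deriv ?_
    field_simp
    ring
  have hlim : Tendsto (fun w => m * stdCdf ((w - m) / σ) - σ * stdPdf ((w - m) / σ))
      atBot (𝓝 0) := by
    have ht : Tendsto (fun w => (w - m) / σ) atBot atBot :=
      (tendsto_atBot_add_const_right _ (-m) tendsto_id).atBot_div_const hσ
    simpa using ((tendsto_stdCdf_atBot.comp ht).const_mul m).sub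
      ((tendsto_stdPdf_atBot.comp ht).const_mul σ)
  rw [← integral_Iic_eq_integral_Iio, integral_Iic_of_hasDerivAt_of_tendsto'
    (fun w _ => hderiv w) (integrable_mul_stdPdf_div hσ.ne' m).integrableOn hlim, sub_zero]

section Bivariate

variable {ρ σ : ℝ} (hσ : 0 < σ) (hρσ : ρ ^ 2 + σ ^ 2 = 1)
include hσ hρσ

lemma binormPdf_eq_stdPdf_mul (z w : ℝ) :
    binormPdf ρ z w = stdPdf z * (stdPdf ((w - ρ * z) / σ) / σ) := by
  have hvar : 1 - ρ ^ 2 = σ ^ 2 := by linarith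
  have hexp : -(z ^ 2 - 2 * ρ * z * w + w ^ 2) / (2 * σ ^ 2) =
      -z ^ 2 / 2 + -((w - ρ * z) / σ) ^ 2 / 2 := by
    field_simp
    linear_combination z ^ 2 * hρσ
  have hconst : (2 * π * σ)⁻¹ = (√(2 * π))⁻¹ * (√(2 * π))⁻¹ / σ := by
    rw [← mul_inv, mul_self_sqrt (by positivity)]
    field_simp
  rw [binormPdf, hvar, sqrt_sq hσ.le, hexp, exp_add, hconst, stdPdf, stdPdf]
  ring

lemma stdPdf_mul_stdPdf_neg_mul_div (z : ℝ) :
    stdPdf z * stdPdf (-ρ * z / σ) = (√(2 * π))⁻¹ * stdPdf (z / σ) :=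
  stdPdf_mul_stdPdf (by field_simp; linear_combination z ^ 2 * hρσ)

lemma integral_Iio_zero_mul_binormPdf (z : ℝ) :
    ∫ w in Iio 0, w * binormPdf ρ z w =
      stdPdf z * (ρ * z * stdCdf (-ρ * z / σ) - σ * stdPdf (-ρ * z / σ)) := by
  simp_rw [binormPdf_eq_stdPdf_mul hσ hρσ, mul_left_comm _ (stdPdf z)]
  rw [integral_const_mul, integral_Iio_mul_stdPdf_div hσ, zero_sub, neg_mul]

lemma integrable_integral_Iio_zero_mul_binormPdf :
    Integrable fun z => ∫ w in Iio 0, w * binormPdf ρ z w := by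
  have hcdf : Integrable fun z => stdCdf (-ρ * z / σ) * (ρ * (z * stdPdf z)) :=
    (integrable_mul_stdPdf.const_mul ρ).bdd_mul
      (continuous_stdCdf.comp (by fun_prop)).aestronglyMeasurable
      (.of_forall fun z => abs_stdCdf_le_one _)
  have hpdf : Integrable fun z => σ * ((√(2 * π))⁻¹ * stdPdf (z / σ)) :=
    ((integrable_stdPdf.comp_div hσ.ne').const_mul _).const_mul σ
  refine (hcdf.sub hpdf).congr (.of_forall fun z => ?_)
  dsimp only [Pi.sub_apply]
  rw [integral_Iio_zero_mul_binormPdf hσ hρσ, mul_sub,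
    ← stdPdf_mul_stdPdf_neg_mul_div hσ hρσ]
  ring

lemma hasDerivAt_integral_Iio_zero_mul_binormPdf (z : ℝ) :
    HasDerivAt (fun z => -(√(2 * π))⁻¹ * stdCdf (z / σ) - ρ * stdPdf z * stdCdf (-ρ * z / σ))
      (∫ w in Iio 0, w * binormPdf ρ z w) z := by
  have h := ((((hasDerivAt_stdCdf _).comp z ((hasDerivAt_id z).div_const σ)).const_mul
    (-(√(2 * π))⁻¹)).sub (((hasDerivAt_stdPdf z).const_mul ρ).mul
    ((hasDerivAt_stdCdf _).comp z (((hasDerivAt_id z).const_mul (-ρ)).div_const σ))))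
  refine h.congr_deriv ?_
  rw [integral_Iio_zero_mul_binormPdf hσ hρσ]
  have hpdf : stdPdf (z / σ) = √(2 * π) * (stdPdf z * stdPdf (-ρ * z / σ)) := by
    rw [stdPdf_mul_stdPdf_neg_mul_div hσ hρσ, mul_inv_cancel_left₀ (by positivity)]
  simp only [Function.comp_apply, id, hpdf, neg_mul, neg_div]
  field_simp
  linear_combination (stdPdf z * stdPdf (-(ρ * z / σ))) * hρσ

lemma integral_Ioi_integral_Iio_zero_mul_binormPdf (u : ℝ) :
    ∫ z in Ioi u, ∫ w in Iio 0, w * binormPdf ρ z w =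
      -(√(2 * π))⁻¹ * stdTail (u / σ) + ρ * stdPdf u * stdCdf (-ρ * u / σ) := by
  have hlim : Tendsto (fun z => -(√(2 * π))⁻¹ * stdCdf (z / σ) - ρ * stdPdf z * stdCdf (-ρ * z / σ))
      atTop (𝓝 (-(√(2 * π))⁻¹)) := by
    have hprod : Tendsto (fun z => stdPdf z * stdCdf (-ρ * z / σ)) atTop (𝓝 0) :=
      tendsto_stdPdf_atTop.zero_mul_isBoundedUnder_le
        (isBoundedUnder_of ⟨1, fun z => abs_stdCdf_le_one _⟩)
    simpa [mul_assoc] using ((tendsto_stdCdf_atTop.comp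
      (tendsto_id.atTop_div_const hσ)).const_mul (-(√(2 * π))⁻¹)).sub (hprod.const_mul ρ)
  rw [integral_Ioi_of_hasDerivAt_of_tendsto'
    (fun z _ => hasDerivAt_integral_Iio_zero_mul_binormPdf hσ hρσ z)
    (integrable_integral_Iio_zero_mul_binormPdf hσ hρσ).integrableOn hlim, stdTail]
  ring

end Bivariate

theorem stmt_0 (ρ : ℝ) (hρ : ρ ∈ Set.Ioo (-1 : ℝ) 1) (u : ℝ) :
    ∫ z in Set.Ioi u, ∫ w in Set.Iio (0 : ℝ), w * binormPdf ρ z w =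
      -(Real.sqrt (2 * Real.pi))⁻¹ *
        (stdTail (u / Real.sqrt (1 - ρ ^ 2)) -
          Real.sqrt (2 * Real.pi) * ρ * stdPdf u *
            stdCdf (-ρ * u / Real.sqrt (1 - ρ ^ 2))) := by
  have hvar : 0 < 1 - ρ ^ 2 := by nlinarith [hρ.1, hρ.2]
  have hσ : 0 < √(1 - ρ ^ 2) := sqrt_pos.2 hvar
  have hρσ : ρ ^ 2 + √(1 - ρ ^ 2) ^ 2 = 1 := by
    rw [sq_sqrt hvar.le]
    ring
  rw [integral_Ioi_integral_Iio_zero_mul_binormPdf hσ hρσ]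
  linear_combination (-ρ * stdPdf u * stdCdf (-ρ * u / √(1 - ρ ^ 2))) *
    inv_mul_cancel₀ (sqrt_pos.2 (by positivity : (0 : ℝ) < 2 * π)).ne'
end

section
/- Let (Ω, 𝔽, P) be a probability space, let N ≥ 1, let H : Ω → (N×N real matrices) be measurable with H(ω) symmetric for all ω, let X : Ω → ℝ be measurable, let A be an invertible N×N real matrix, and let u ∈ ℝ. Assume |det H| is P-integrable and E[ |det H| · 1_{H ≺ 0} ] > 0, where H ≺ 0 means H is negative definite. Then E[ |det(AᵀHA)| · 1_{X > u} · 1_{AᵀHA ≺ 0} ] / E[ |det(AᵀHA)| · 1_{AᵀHA ≺ 0} ] = E[ |det H| · 1_{X > u} · 1_{H ≺ 0} ] / E[ |det H| · 1_{H ≺ 0} ]. (This ratio invariance under congruence by an invertible matrix shows that an anisotropic Gaussian field X(t) = Z(At), where Z is isotropic, has the same Kac–Rice peak height distribution as Z.) -/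
open MeasureTheory Matrix
open scoped Classical

/-- A real symmetric matrix is negative definite if its quadratic form is negative on all
nonzero vectors. -/
def IsNegDef {N : ℕ} (M : Matrix (Fin N) (Fin N) ℝ) : Prop :=
  ∀ v : Fin N → ℝ, v ≠ 0 → v ⬝ᵥ M.mulVec v < 0

/-! The quadratic form of `Aᵀ M A` at `v` is that of `M` at `A v`, so congruence by an invertible
`A` preserves negative definiteness, while it multiplies `|det M|` by `det A ^ 2`. Numerator and
denominator are thus scaled by the same nonzero constant, which cancels. -/

theorem dotProduct_mulVec_transpose_mul_mul {n R : Type*} [Fintype n] [CommSemiring R]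
    (A M : Matrix n n R) (v : n → R) :
    v ⬝ᵥ (Aᵀ * M * A) *ᵥ v = (A *ᵥ v) ⬝ᵥ M *ᵥ (A *ᵥ v) := by
  rw [← mulVec_mulVec, ← mulVec_mulVec, dotProduct_mulVec, vecMul_transpose]

theorem isNegDef_transpose_mul_mul_iff {N : ℕ} {A : Matrix (Fin N) (Fin N) ℝ}
    (hA : IsUnit A.det) (M : Matrix (Fin N) (Fin N) ℝ) :
    IsNegDef (Aᵀ * M * A) ↔ IsNegDef M := by
  have hA' : IsUnit A := (isUnit_iff_isUnit_det A).mpr hA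
  have hinj : Function.Injective A.mulVec := mulVec_injective_iff_isUnit.mpr hA'
  refine (forall_congr' fun v => ?_).trans (mulVec_surjective_iff_isUnit.mpr hA').forall.symm
  rw [dotProduct_mulVec_transpose_mul_mul, hinj.ne_iff' (mulVec_zero A)]

theorem abs_det_transpose_mul_mul {n R : Type*} [Fintype n] [DecidableEq n]
    [CommRing R] [LinearOrder R] [IsStrictOrderedRing R] (A M : Matrix n n R) :
    |(Aᵀ * M * A).det| = A.det ^ 2 * |M.det| := by
  rw [det_mul, det_mul, det_transpose, abs_mul, abs_mul, ← sq_abs A.det]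
  ring

theorem integral_const_mul_div_integral_const_mul {α : Type*} [MeasurableSpace α]
    (μ : Measure α) {c : ℝ} (hc : c ≠ 0) (f g : α → ℝ) :
    (∫ x, c * f x ∂μ) / (∫ x, c * g x ∂μ) = (∫ x, f x ∂μ) / (∫ x, g x ∂μ) := by
  rw [integral_const_mul, integral_const_mul, mul_div_mul_left _ _ hc]

theorem stmt_13_general {Ω : Type*} [MeasurableSpace Ω] (P : Measure Ω)
    (N : ℕ) (H : Ω → Matrix (Fin N) (Fin N) ℝ) (X : Ω → ℝ)
    (A : Matrix (Fin N) (Fin N) ℝ) (hA : IsUnit A.det) (u : ℝ) :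
    (∫ ω, |(Aᵀ * H ω * A).det| * (if X ω > u then (1 : ℝ) else 0) *
        (if IsNegDef (Aᵀ * H ω * A) then (1 : ℝ) else 0) ∂P) /
      (∫ ω, |(Aᵀ * H ω * A).det| *
        (if IsNegDef (Aᵀ * H ω * A) then (1 : ℝ) else 0) ∂P) =
    (∫ ω, |(H ω).det| * (if X ω > u then (1 : ℝ) else 0) *
        (if IsNegDef (H ω) then (1 : ℝ) else 0) ∂P) /
      (∫ ω, |(H ω).det| * (if IsNegDef (H ω) then (1 : ℝ) else 0) ∂P) := by
  simp_rw [abs_det_transpose_mul_mul, isNegDef_transpose_mul_mul_iff hA, mul_assoc]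
  exact integral_const_mul_div_integral_const_mul P (pow_ne_zero 2 hA.ne_zero) _ _

theorem stmt_13 {Ω : Type*} [MeasurableSpace Ω] (P : Measure Ω) [IsProbabilityMeasure P]
    (N : ℕ) (hN : 1 ≤ N) (H : Ω → Matrix (Fin N) (Fin N) ℝ) (hHmeas : ∀ i j, Measurable fun ω => H ω i j)
    (hHsymm : ∀ ω, (H ω).IsSymm) (X : Ω → ℝ) (hXmeas : Measurable X)
    (A : Matrix (Fin N) (Fin N) ℝ) (hA : IsUnit A.det) (u : ℝ)
    (hint : Integrable (fun ω => |(H ω).det|) P)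
    (hpos : 0 < ∫ ω, |(H ω).det| * (if IsNegDef (H ω) then (1 : ℝ) else 0) ∂P) :
    (∫ ω, |(Aᵀ * H ω * A).det| * (if X ω > u then (1 : ℝ) else 0) *
        (if IsNegDef (Aᵀ * H ω * A) then (1 : ℝ) else 0) ∂P) /
      (∫ ω, |(Aᵀ * H ω * A).det| *
        (if IsNegDef (Aᵀ * H ω * A) then (1 : ℝ) else 0) ∂P) =
    (∫ ω, |(H ω).det| * (if X ω > u then (1 : ℝ) else 0) *
        (if IsNegDef (H ω) then (1 : ℝ) else 0) ∂P) /
      (∫ ω, |(H ω).det| * (if IsNegDef (H ω) then (1 : ℝ) else 0) ∂P) :=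
  stmt_13_general P N H X A hA u
end
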